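/- arXiv:1401.4662 — 7 statements merged into one kernel-verified Lean document; each statement's English description precedes it below -/
import Mathlib

section
/- Let g and (h_i)_{i∈ψ} be independent random variables, each exponentially distributed with rate 1, where ψ is a nonempty finite index set. Fix r>0, α≥2, distances d_i>0 for i∈ψ, and N≥0. Define the SINR η = g r^{-α} / (N + Σ_{i∈ψ} h_i d_i^{-α}). Then for every T ≥ 0, the coverage probability satisfies P(η > T) = e^{-T r^α N} · ∏_{i∈ψ} (1 + T r^α d_i^{-α})^{-1}. -/
/-!
Put `c = T r^α` and `S = ∑ i, h i d i^{-α}`. Since `S > 0` almost surely, coverage is the event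
`c (N + S) < g`. For `X ~ Exp(r)` independent of a threshold `Y ≥ 0`, conditioning on `Y` gives
`P(Y < X) = E[e^{-r Y}]`, so the coverage probability is `e^{-cN}` times the Laplace transform of
`S` at `c`. By independence this factorises over `i`, and the Laplace transform of `Exp(1)` at
`c d i^{-α}` is `(1 + c d i^{-α})⁻¹`.
-/

open MeasureTheory ProbabilityTheory Real Set

lemma lt_mul_rpow_neg_div_iff {T x r α D : ℝ} (hr : 0 < r) (hD : 0 < D) :
    T < x * r ^ (-α) / D ↔ T * r ^ α * D < x := by
  rw [rpow_neg hr.le, ← div_eq_mul_inv, div_div, lt_div_iff₀ (by positivity), mul_assoc]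

namespace ProbabilityTheory

lemma expMeasure_Ioi {r a : ℝ} (hr : 0 < r) (ha : 0 ≤ a) :
    expMeasure r (Ioi a) = ENNReal.ofReal (exp (-(r * a))) := by
  have := isProbabilityMeasure_expMeasure hr
  have hle : exp (-(r * a)) ≤ 1 := exp_le_one_iff.2 (neg_nonpos.2 (mul_nonneg hr.le ha))
  rw [← compl_Iic, prob_compl_eq_one_sub measurableSet_Iic, ← ofReal_cdf, cdf_expMeasure_eq hr,
    if_pos ha, ← ENNReal.ofReal_one, ← ENNReal.ofReal_sub _ (sub_nonneg.2 hle), sub_sub_cancel]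

lemma ae_pos_expMeasure {r : ℝ} (hr : 0 < r) : ∀ᵐ x ∂expMeasure r, 0 < x := by
  have := isProbabilityMeasure_expMeasure hr
  refine (prob_compl_eq_zero_iff measurableSet_Ioi).2 ?_
  rw [expMeasure_Ioi hr le_rfl]
  simp

lemma integral_expMeasure {r : ℝ} (hr : 0 ≤ r) (f : ℝ → ℝ) :
    ∫ x, f x ∂expMeasure r = ∫ x in Ioi 0, r * exp (-(r * x)) * f x := by
  rw [expMeasure, gammaMeasure, integral_withDensity_eq_integral_toReal_smul
    (f := gammaPDF 1 r) (measurable_gammaPDFReal 1 r).ennreal_ofReal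
    (ae_of_all _ fun _ ↦ ENNReal.ofReal_lt_top),
    ← integral_Ici_eq_integral_Ioi, ← integral_indicator measurableSet_Ici]
  congr 1 with x
  change (exponentialPDF r x).toReal * f x = _
  by_cases hx : 0 ≤ x
  · rw [exponentialPDF_of_nonneg hx, indicator_of_mem (mem_Ici.2 hx),
      ENNReal.toReal_ofReal (by positivity)]
  · rw [exponentialPDF_of_neg (not_le.1 hx), indicator_of_notMem (by simpa using hx)]
    simp

lemma mgf_id_expMeasure {r t : ℝ} (hr : 0 < r) (ht : t < r) :
    mgf id (expMeasure r) t = r / (r - t) := by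
  have hexp (x : ℝ) : r * exp (-(r * x)) * exp (t * id x) = r * exp ((t - r) * x) := by
    rw [mul_assoc, ← exp_add, id]; ring_nf
  rw [mgf, integral_expMeasure hr.le]
  simp_rw [hexp]
  rw [integral_const_mul, integral_exp_mul_Ioi (by linarith) 0, mul_zero, exp_zero, neg_div,
    ← div_neg, neg_sub, mul_one_div]

variable {Ω : Type*} [MeasurableSpace Ω] {μ : Measure Ω}

lemma ae_pos_of_map_eq_expMeasure {X : Ω → ℝ} {r : ℝ} (hr : 0 < r) (hX : AEMeasurable X μ)
    (hXexp : μ.map X = expMeasure r) : ∀ᵐ ω ∂μ, 0 < X ω :=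
  ae_of_ae_map hX (hXexp ▸ ae_pos_expMeasure hr)

lemma IndepFun.measureReal_lt_eq_mgf [IsFiniteMeasure μ] {X Y : Ω → ℝ} {r : ℝ} (hr : 0 < r)
    (hX : Measurable X) (hY : Measurable Y) (hXexp : μ.map X = expMeasure r)
    (hY_nonneg : ∀ᵐ ω ∂μ, 0 ≤ Y ω) (hindep : IndepFun Y X μ) :
    μ.real {ω | Y ω < X ω} = mgf Y μ (-r) := by
  have := isProbabilityMeasure_expMeasure hr
  have hA : MeasurableSet {p : ℝ × ℝ | p.1 < p.2} := measurableSet_lt measurable_fst measurable_snd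
  have hmap : μ.map (fun ω ↦ (Y ω, X ω)) = (μ.map Y).prod (expMeasure r) := by
    rw [← hXexp]
    exact (indepFun_iff_map_prod_eq_prod_map_map hY.aemeasurable hX.aemeasurable).1 hindep
  have hlintegral : μ {ω | Y ω < X ω} = ∫⁻ ω, ENNReal.ofReal (exp (-r * Y ω)) ∂μ := by
    calc μ {ω | Y ω < X ω} = μ.map (fun ω ↦ (Y ω, X ω)) {p | p.1 < p.2} := by
          rw [Measure.map_apply (hY.prodMk hX) hA]; rfl
      _ = ∫⁻ y, expMeasure r (Ioi y) ∂μ.map Y := by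
          rw [hmap, Measure.prod_apply hA]; rfl
      _ = ∫⁻ y, ENNReal.ofReal (exp (-r * y)) ∂μ.map Y := by
          refine lintegral_congr_ae ?_
          filter_upwards [(ae_map_iff hY.aemeasurable measurableSet_Ici).2 hY_nonneg] with y hy
          rw [expMeasure_Ioi hr hy, neg_mul]
      _ = ∫⁻ ω, ENNReal.ofReal (exp (-r * Y ω)) ∂μ := lintegral_map (by fun_prop) hY
  rw [measureReal_def, hlintegral, mgf, integral_eq_lintegral_of_nonneg_ae
    (ae_of_all _ fun _ ↦ (exp_pos _).le) (by fun_prop)]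

lemma iIndepFun.mgf_sum_mul_eq_prod {ι : Type*} [Fintype ι] {X : ι → Ω → ℝ}
    (hindep : iIndepFun X μ) (hX : ∀ i, Measurable (X i)) {r : ι → ℝ} (hr : ∀ i, 0 < r i)
    (hXexp : ∀ i, μ.map (X i) = expMeasure (r i)) (w : ι → ℝ) {t : ℝ} (ht : ∀ i, t * w i < r i) :
    mgf (fun ω ↦ ∑ i, X i ω * w i) μ t = ∏ i, r i / (r i - t * w i) := by
  have hsum : (fun ω ↦ ∑ i, X i ω * w i) = ∑ i, fun ω ↦ X i ω * w i := by
    ext ω; rw [Finset.sum_apply]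
  have hindep_mul : iIndepFun (fun i ω ↦ X i ω * w i) μ :=
    hindep.comp (fun i x ↦ x * w i) fun i ↦ measurable_mul_const _
  rw [hsum, hindep_mul.mgf_sum (fun i ↦ (hX i).mul_const _) Finset.univ]
  refine Finset.prod_congr rfl fun i _ ↦ ?_
  simp_rw [mul_comm _ (w i), mgf_const_mul]
  rw [← mgf_id_map (hX i).aemeasurable, hXexp, mul_comm, mgf_id_expMeasure (hr i) (ht i)]

lemma iIndepFun.indepFun_none_some {ι β : Type*} [Fintype ι] [MeasurableSpace β]
    {f : Option ι → Ω → β} (hindep : iIndepFun f μ) (hf : ∀ o, Measurable (f o)) :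
    IndepFun (f none) (fun ω i ↦ f (some i) ω) μ := by
  have hnone : none ∈ ({none} : Finset (Option ι)) := Finset.mem_singleton_self _
  have hsome (i : ι) : some i ∈ Finset.univ.map Function.Embedding.some := by simp
  have hφ : Measurable fun v : ({none} : Finset (Option ι)) → β ↦ v ⟨none, hnone⟩ :=
    measurable_pi_apply _
  have hψ : Measurable fun (v : (Finset.univ.map Function.Embedding.some) → β) i ↦
      v ⟨some i, hsome i⟩ :=
    measurable_pi_lambda _ fun i ↦ measurable_pi_apply _
  exact (hindep.indepFun_finset _ _ (by simp) hf).comp hφ hψ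

end ProbabilityTheory

theorem coverage_probability_FR1_general
    {Ω : Type*} [MeasurableSpace Ω] (μ : Measure Ω) [IsProbabilityMeasure μ]
    {ι : Type*} [Fintype ι] [Nonempty ι]
    (g : Ω → ℝ) (h : ι → Ω → ℝ)
    (hg_meas : Measurable g) (hh_meas : ∀ i, Measurable (h i))
    (hg_exp : Measure.map g μ = expMeasure 1)
    (hh_exp : ∀ i, Measure.map (h i) μ = expMeasure 1)
    (h_indep : iIndepFun
      (fun o : Option ι => Option.elim o g h) μ)
    (r α N : ℝ) (hr : 0 < r) (hN : 0 ≤ N)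
    (d : ι → ℝ) (hd : ∀ i, 0 < d i)
    (T : ℝ) (hT : 0 ≤ T) :
    (μ {ω | T < g ω * r ^ (-α) / (N + ∑ i, h i ω * d i ^ (-α))}).toReal
      = Real.exp (-(T * r ^ α * N)) * ∏ i, (1 + T * r ^ α * d i ^ (-α))⁻¹ := by
  set S : Ω → ℝ := fun ω ↦ ∑ i, h i ω * d i ^ (-α)
  set c := T * r ^ α
  have hS_pos : ∀ᵐ ω ∂μ, 0 < S ω := by
    filter_upwards [ae_all_iff.2 fun i ↦
      ae_pos_of_map_eq_expMeasure one_pos (hh_meas i).aemeasurable (hh_exp i)] with ω hω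
    exact Finset.sum_pos (fun i _ ↦ mul_pos (hω i) (rpow_pos_of_pos (hd i) _))
      Finset.univ_nonempty
  have hevent : {ω | T < g ω * r ^ (-α) / (N + S ω)} =ᵐ[μ] {ω | c * (N + S ω) < g ω} := by
    filter_upwards [hS_pos] with ω hω
    exact propext (lt_mul_rpow_neg_div_iff hr (by positivity))
  have h_meas (o : Option ι) : Measurable (Option.elim o g h) := by
    cases o
    exacts [hg_meas, hh_meas _]
  have hindep : IndepFun (fun ω ↦ c * (N + S ω)) g μ := by
    have hφ : Measurable fun v : ι → ℝ ↦ c * (N + ∑ i, v i * d i ^ (-α)) := by fun_prop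
    exact (h_indep.indepFun_none_some h_meas).symm.comp hφ measurable_id
  have hc : 0 ≤ c := mul_nonneg hT (rpow_pos_of_pos hr α).le
  have hmgf_S : mgf S μ (-c) = ∏ i, (1 + c * d i ^ (-α))⁻¹ := by
    have hh_indep : iIndepFun h μ := h_indep.precomp (g := some) (Option.some_injective ι)
    have hcw (i : ι) : -c * d i ^ (-α) < 1 := by
      nlinarith [mul_nonneg hc (rpow_pos_of_pos (hd i) (-α)).le]
    refine (hh_indep.mgf_sum_mul_eq_prod hh_meas (fun _ ↦ one_pos) hh_exp _ hcw).trans ?_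
    simp only [one_div, neg_mul, sub_neg_eq_add]
  rw [← measureReal_def, measureReal_congr hevent,
    hindep.measureReal_lt_eq_mgf one_pos hg_meas (by fun_prop) hg_exp
      (hS_pos.mono fun ω hω ↦ by positivity),
    mgf_const_mul, mgf_const_add, mul_neg_one, neg_mul, hmgf_S]

/-- For a user with desired fading `g ~ Exp(1)` and independent interfering
fadings `h i ~ Exp(1)` (over a nonempty finite index set), distances `d i > 0`,
distance `r > 0`, path loss exponent `α ≥ 2` and noise-to-power ratio `N ≥ 0`,
the coverage probability of the SINR `η = g r^{-α} / (N + ∑ i, h i * d i^{-α})` at any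
threshold `T ≥ 0` is `e^{-T r^α N} ∏ i, (1 + T r^α d i^{-α})⁻¹`. -/
theorem coverage_probability_FR1
    {Ω : Type*} [MeasurableSpace Ω] (μ : Measure Ω) [IsProbabilityMeasure μ]
    {ι : Type*} [Fintype ι] [Nonempty ι]
    (g : Ω → ℝ) (h : ι → Ω → ℝ)
    (hg_meas : Measurable g) (hh_meas : ∀ i, Measurable (h i))
    (hg_exp : Measure.map g μ = expMeasure 1)
    (hh_exp : ∀ i, Measure.map (h i) μ = expMeasure 1)
    (h_indep : iIndepFun
      (fun o : Option ι => Option.elim o g h) μ)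
    (r α N : ℝ) (hr : 0 < r) (hα : 2 ≤ α) (hN : 0 ≤ N)
    (d : ι → ℝ) (hd : ∀ i, 0 < d i)
    (T : ℝ) (hT : 0 ≤ T) :
    (μ {ω | T < g ω * r ^ (-α) / (N + ∑ i, h i ω * d i ^ (-α))}).toReal
      = Real.exp (-(T * r ^ α * N)) * ∏ i, (1 + T * r ^ α * d i ^ (-α))⁻¹ :=
  coverage_probability_FR1_general μ g h hg_meas hh_meas hg_exp hh_exp h_indep r α N hr hN d hd T hT
end

section
/- Fix r>0, α≥2, a nonempty finite index set ψ with distances d_i>0, a nonempty subset φ ⊆ ψ, and N≥0. Define CP1(x) = e^{-x r^α N} ∏_{i∈ψ}(1+x r^α d_i^{-α})^{-1}, CP3(x) = e^{-x r^α N} ∏_{i∈φ}(1+x r^α d_i^{-α})^{-1}, and the FFR coverage probability CP_F(S_th) = CP1(max(T, S_th)) + CP3(T) − CP3(T)·CP1(S_th). Then for every fixed target SINR T > 0, CP_F attains its maximum over S_th ∈ [0,∞) uniquely at S_th = T; that is, CP_F(S_th) < CP_F(T) for every S_th ≥ 0 with S_th ≠ T. -/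
open MeasureTheory

/-- FR1 coverage probability at threshold `x`. -/
noncomputable def CP1 {ι : Type*} [Fintype ι] (d : ι → ℝ) (r α N x : ℝ) : ℝ :=
  Real.exp (-(x * r ^ α * N)) * ∏ i, (1 + x * r ^ α * d i ^ (-α))⁻¹

/-- FR3 coverage probability (interferer set `φ`) at threshold `x`. -/
noncomputable def CP3 {ι : Type*} (φ : Finset ι) (d : ι → ℝ) (r α N x : ℝ) : ℝ :=
  Real.exp (-(x * r ^ α * N)) * ∏ i ∈ φ, (1 + x * r ^ α * d i ^ (-α))⁻¹

/-- FFR coverage probability at SINR threshold `S_th` and target SINR `T`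
(uncorrelated sub-band case). -/
noncomputable def CPF {ι : Type*} [Fintype ι] (φ : Finset ι) (d : ι → ℝ)
    (r α N T Sth : ℝ) : ℝ :=
  CP1 d r α N (max T Sth) + CP3 φ d r α N T - CP3 φ d r α N T * CP1 d r α N Sth

section Aux

variable {ι : Type*} [Fintype ι] [Nonempty ι] (d : ι → ℝ) (r α N : ℝ)

lemma factor_pos (hr : 0 < r) (hd : ∀ i, 0 < d i) {x : ℝ} (hx : 0 ≤ x) (i : ι) :
    0 < (1 + x * r ^ α * d i ^ (-α))⁻¹ := by
  have h1 : 0 < r ^ α := Real.rpow_pos_of_pos hr α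
  have h2 : 0 < d i ^ (-α) := Real.rpow_pos_of_pos (hd i) _
  have : 0 ≤ x * r ^ α * d i ^ (-α) := by positivity
  positivity

lemma CP1_pos (hr : 0 < r) (hd : ∀ i, 0 < d i) {x : ℝ} (hx : 0 ≤ x) :
    0 < CP1 d r α N x := by
  unfold CP1
  exact mul_pos (Real.exp_pos _)
    (Finset.prod_pos fun i _ => factor_pos d r α hr hd hx i)

lemma CP3_pos (φ : Finset ι) (hr : 0 < r) (hd : ∀ i, 0 < d i) {x : ℝ} (hx : 0 ≤ x) :
    0 < CP3 φ d r α N x := by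
  unfold CP3
  exact mul_pos (Real.exp_pos _)
    (Finset.prod_pos fun i _ => factor_pos d r α hr hd hx i)

lemma CP3_lt_one (φ : Finset ι) (hφ : φ.Nonempty) (hr : 0 < r) (hN : 0 ≤ N)
    (hd : ∀ i, 0 < d i) {x : ℝ} (hx : 0 < x) :
    CP3 φ d r α N x < 1 := by
  have hrα : 0 < r ^ α := Real.rpow_pos_of_pos hr α
  have hprod : ∏ i ∈ φ, (1 + x * r ^ α * d i ^ (-α))⁻¹ < 1 := by
    have := Finset.prod_lt_prod_of_nonempty
      (f := fun i => (1 + x * r ^ α * d i ^ (-α))⁻¹) (g := fun _ => (1 : ℝ))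
      (fun i _ => factor_pos d r α hr hd hx.le i)
      (fun i _ => by
        have hdi : 0 < d i ^ (-α) := Real.rpow_pos_of_pos (hd i) _
        have h : (1:ℝ) < 1 + x * r ^ α * d i ^ (-α) := by
          nlinarith [mul_pos (mul_pos hx hrα) hdi]
        have := inv_lt_one_of_one_lt₀ h
        simpa using this) hφ
    simpa using this
  have hexp : Real.exp (-(x * r ^ α * N)) ≤ 1 := by
    rw [Real.exp_le_one_iff]
    nlinarith [mul_nonneg (mul_nonneg hx.le hrα.le) hN]
  have hpnn : 0 ≤ ∏ i ∈ φ, (1 + x * r ^ α * d i ^ (-α))⁻¹ :=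
    Finset.prod_nonneg fun i _ => (factor_pos d r α hr hd hx.le i).le
  calc CP3 φ d r α N x ≤ 1 * ∏ i ∈ φ, (1 + x * r ^ α * d i ^ (-α))⁻¹ :=
        mul_le_mul_of_nonneg_right hexp hpnn
    _ = _ := one_mul _
    _ < 1 := hprod

lemma CP1_strictAnti (hr : 0 < r) (hN : 0 ≤ N) (hd : ∀ i, 0 < d i)
    {x y : ℝ} (hx : 0 ≤ x) (hxy : x < y) :
    CP1 d r α N y < CP1 d r α N x := by
  have hrα : 0 < r ^ α := Real.rpow_pos_of_pos hr α
  have hexp : Real.exp (-(y * r ^ α * N)) ≤ Real.exp (-(x * r ^ α * N)) := by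
    apply Real.exp_le_exp.2
    have := mul_le_mul_of_nonneg_right
      (mul_le_mul_of_nonneg_right hxy.le hrα.le) hN
    linarith
  have hprod : ∏ i, (1 + y * r ^ α * d i ^ (-α))⁻¹
      < ∏ i, (1 + x * r ^ α * d i ^ (-α))⁻¹ := by
    apply Finset.prod_lt_prod_of_nonempty
      (fun i _ => factor_pos d r α hr hd (hx.trans hxy.le) i)
      (fun i _ => by
        have hdi : 0 < d i ^ (-α) := Real.rpow_pos_of_pos (hd i) _
        apply inv_strictAnti₀
        · nlinarith [mul_nonneg (mul_nonneg hx hrα.le) hdi.le]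
        · have := mul_lt_mul_of_pos_right
            (mul_lt_mul_of_pos_right hxy hrα) hdi
          linarith)
      Finset.univ_nonempty
  exact mul_lt_mul' hexp hprod
    (Finset.prod_nonneg fun i _ => (factor_pos d r α hr hd (hx.trans hxy.le) i).le)
    (Real.exp_pos _)

end Aux

/-- the FFR coverage probability is uniquely maximized over
`S_th ∈ [0,∞)` at `S_th = T`. -/
theorem FFR_coverage_uniquely_maximized_at_T
    {ι : Type*} [Fintype ι] [Nonempty ι]
    (φ : Finset ι) (hφ : φ.Nonempty)
    (r α N : ℝ) (hr : 0 < r) (hα : 2 ≤ α) (hN : 0 ≤ N)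
    (d : ι → ℝ) (hd : ∀ i, 0 < d i)
    (T : ℝ) (hT : 0 < T) :
    ∀ Sth : ℝ, 0 ≤ Sth → Sth ≠ T →
      CPF φ d r α N T Sth < CPF φ d r α N T T := by
  intro Sth hSth hne
  have hC : 0 < CP3 φ d r α N T := CP3_pos d r α N φ hr hd hT.le
  have hC1 : CP3 φ d r α N T < 1 := CP3_lt_one d r α N φ hφ hr hN hd hT
  rcases lt_or_gt_of_ne hne with h | h
  · -- Sth < T
    have hmax1 : max T Sth = T := max_eq_left h.le
    have hmono : CP1 d r α N T < CP1 d r α N Sth :=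
      CP1_strictAnti d r α N hr hN hd hSth h
    simp only [CPF, hmax1, max_self]
    nlinarith
  · -- T < Sth
    have hmax1 : max T Sth = Sth := max_eq_right h.le
    have hmono : CP1 d r α N Sth < CP1 d r α N T :=
      CP1_strictAnti d r α N hr hN hd hT.le h
    simp only [CPF, hmax1, max_self]
    nlinarith
end

section
/- Fix r>0, α≥2, a nonempty finite index set ψ with distances d_i>0, a nonempty subset φ ⊆ ψ, N≥0, and T > 0. Define CP1(x) = e^{-x r^α N} ∏_{i∈ψ}(1+x r^α d_i^{-α})^{-1} and CP3(x) = e^{-x r^α N} ∏_{i∈φ}(1+x r^α d_i^{-α})^{-1}. Then the FFR coverage probability at the optimal SINR threshold S_th = T satisfies CP_F(T) = CP1(T)·(1 − CP3(T)) + CP3(T), and this strictly exceeds the FR3 coverage probability: CP_F(T) > CP3(T). -/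
open MeasureTheory

/-- at the optimal SINR threshold `S_th = T`, the FFR coverage probability
equals `CP1(T)(1 − CP3(T)) + CP3(T)` and strictly exceeds the FR3 coverage
probability `CP3(T)`. -/
theorem FFR_coverage_at_optimal_threshold_exceeds_FR3
    {ι : Type*} [Fintype ι] [Nonempty ι]
    (φ : Finset ι) (hφ : φ.Nonempty)
    (r α N : ℝ) (hr : 0 < r) (hα : 2 ≤ α) (hN : 0 ≤ N)
    (d : ι → ℝ) (hd : ∀ i, 0 < d i)
    (T : ℝ) (hT : 0 < T) :
    CPF φ d r α N T T = CP1 d r α N T * (1 - CP3 φ d r α N T) + CP3 φ d r α N T ∧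
      CP3 φ d r α N T < CPF φ d r α N T T := by
  have hterm : ∀ i, 0 < T * r ^ α * d i ^ (-α) := fun i =>
    mul_pos (mul_pos hT (Real.rpow_pos_of_pos hr α)) (Real.rpow_pos_of_pos (hd i) (-α))
  have hexp_pos : 0 < Real.exp (-(T * r ^ α * N)) := Real.exp_pos _
  have hexp_le : Real.exp (-(T * r ^ α * N)) ≤ 1 := by
    rw [Real.exp_le_one_iff, neg_nonpos]
    exact mul_nonneg (le_of_lt (mul_pos hT (Real.rpow_pos_of_pos hr α))) hN
  have hCP1_pos : 0 < CP1 d r α N T := by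
    apply mul_pos hexp_pos
    exact Finset.prod_pos fun i _ => inv_pos.mpr (by linarith [hterm i])
  have hprod_lt : ∏ i ∈ φ, (1 + T * r ^ α * d i ^ (-α))⁻¹ < 1 := by
    calc ∏ i ∈ φ, (1 + T * r ^ α * d i ^ (-α))⁻¹
        < ∏ i ∈ φ, 1 := by
          apply Finset.prod_lt_prod_of_nonempty _ _ hφ
          · exact fun i _ => inv_pos.mpr (by linarith [hterm i])
          · intro i _
            rw [inv_lt_one_iff₀]
            right; linarith [hterm i]
      _ = 1 := Finset.prod_const_one
  have hprod_pos : 0 < ∏ i ∈ φ, (1 + T * r ^ α * d i ^ (-α))⁻¹ :=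
    Finset.prod_pos fun i _ => inv_pos.mpr (by linarith [hterm i])
  have hCP3_lt : CP3 φ d r α N T < 1 := by
    unfold CP3
    calc Real.exp (-(T * r ^ α * N)) * ∏ i ∈ φ, (1 + T * r ^ α * d i ^ (-α))⁻¹
        ≤ 1 * ∏ i ∈ φ, (1 + T * r ^ α * d i ^ (-α))⁻¹ :=
          mul_le_mul_of_nonneg_right hexp_le (le_of_lt hprod_pos)
      _ = ∏ i ∈ φ, (1 + T * r ^ α * d i ^ (-α))⁻¹ := one_mul _
      _ < 1 := hprod_lt
  have heq : CPF φ d r α N T T = CP1 d r α N T * (1 - CP3 φ d r α N T) + CP3 φ d r α N T := by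
    unfold CPF
    rw [max_self]
    ring
  refine ⟨heq, ?_⟩
  rw [heq]
  nlinarith [mul_pos hCP1_pos (sub_pos.mpr hCP3_lt)]
end

section
/- Fix r>0, α≥2, a finite index set ψ with distances d_i>0, a proper nonempty subset φ ⊊ ψ, and N≥0. Define CP1(x) = e^{-x r^α N} ∏_{i∈ψ}(1+x r^α d_i^{-α})^{-1} and CP3(x) = e^{-x r^α N} ∏_{i∈φ}(1+x r^α d_i^{-α})^{-1}. Let T > 0, let 0 ≤ S_th < T, and let Ŝ_th ≥ 0 satisfy CP3(Ŝ_th) = CP1(S_th). Then the fully-correlated FFR coverage probability satisfies CP1(T) + CP3(T) − CP3(max(Ŝ_th, T)) < CP3(T); consequently, in the fully correlated case, every threshold choice S_th < T gives strictly smaller FFR coverage probability than the value CP3(T) achieved by every choice S_th ≥ T. -/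
open MeasureTheory

/-- in the fully correlated sub-band case, for any threshold choice
`S_th < T` (with transformed threshold `Ŝ_th` defined by `CP3(Ŝ_th) = CP1(S_th)`),
the FFR coverage probability `CP1(T) + CP3(T) − CP3(max(Ŝ_th,T))` is strictly smaller
than the value `CP3(T)` achieved by every choice `S_th ≥ T`. -/
theorem correlated_FFR_coverage_lt_CP3_of_Sth_lt_T
    {ι : Type*} [Fintype ι]
    (φ : Finset ι) (hφ_ne : φ.Nonempty) (hφ : φ ⊂ Finset.univ)
    (r α N : ℝ) (hr : 0 < r) (hα : 2 ≤ α) (hN : 0 ≤ N)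
    (d : ι → ℝ) (hd : ∀ i, 0 < d i)
    (T Sth Shat : ℝ) (hT : 0 < T) (hSth : 0 ≤ Sth) (hSthT : Sth < T)
    (hShat : 0 ≤ Shat) (hShat_eq : CP3 φ d r α N Shat = CP1 d r α N Sth) :
    CP1 d r α N T + CP3 φ d r α N T - CP3 φ d r α N (max Shat T)
      < CP3 φ d r α N T := by
  have hK : (0:ℝ) < r ^ α := Real.rpow_pos_of_pos hr α
  have hc : ∀ i, (0:ℝ) < d i ^ (-α) := fun i => Real.rpow_pos_of_pos (hd i) _
  have hfpos : ∀ (x : ℝ), 0 ≤ x → ∀ i : ι, (0:ℝ) < (1 + x * r ^ α * d i ^ (-α))⁻¹ := by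
    intro x hx i
    have h1 : (0:ℝ) ≤ x * r ^ α * d i ^ (-α) :=
      mul_nonneg (mul_nonneg hx hK.le) (hc i).le
    exact inv_pos.mpr (by linarith)
  classical
  have key : CP1 d r α N T < CP3 φ d r α N (max Shat T) := by
    rcases le_or_gt Shat T with h | h
    · rw [max_eq_right h]
      -- CP1 T < CP3 T
      unfold CP1 CP3
      rw [← Finset.prod_mul_prod_compl φ (fun i => (1 + T * r ^ α * d i ^ (-α))⁻¹)]
      have hcompl : φᶜ.Nonempty := by
        rcases Finset.exists_of_ssubset hφ with ⟨i, _, hi⟩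
        exact ⟨i, Finset.mem_compl.mpr hi⟩
      have hprodφ : (0:ℝ) < ∏ i ∈ φ, (1 + T * r ^ α * d i ^ (-α))⁻¹ :=
        Finset.prod_pos fun i _ => hfpos T hT.le i
      have hlt1 : ∏ i ∈ φᶜ, (1 + T * r ^ α * d i ^ (-α))⁻¹ < 1 := by
        calc ∏ i ∈ φᶜ, (1 + T * r ^ α * d i ^ (-α))⁻¹
            < ∏ _i ∈ φᶜ, (1:ℝ) := by
              apply Finset.prod_lt_prod_of_nonempty
                (fun i _ => hfpos T hT.le i) _ hcompl
              intro i _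
              rw [inv_lt_one_iff₀]
              right
              nlinarith [mul_pos (mul_pos hT hK) (hc i)]
          _ = 1 := Finset.prod_const_one
      have hepos : (0:ℝ) < Real.exp (-(T * r ^ α * N)) := Real.exp_pos _
      calc Real.exp (-(T * r ^ α * N)) *
            ((∏ i ∈ φ, (1 + T * r ^ α * d i ^ (-α))⁻¹) *
              ∏ i ∈ φᶜ, (1 + T * r ^ α * d i ^ (-α))⁻¹)
          < Real.exp (-(T * r ^ α * N)) *
            ((∏ i ∈ φ, (1 + T * r ^ α * d i ^ (-α))⁻¹) * 1) := by
            apply mul_lt_mul_of_pos_left _ hepos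
            exact mul_lt_mul_of_pos_left hlt1 hprodφ
        _ = Real.exp (-(T * r ^ α * N)) * ∏ i ∈ φ, (1 + T * r ^ α * d i ^ (-α))⁻¹ := by ring
    · rw [max_eq_left h.le, hShat_eq]
      -- CP1 T < CP1 Sth
      unfold CP1
      have huniv : (Finset.univ : Finset ι).Nonempty :=
        ⟨hφ_ne.choose, Finset.mem_univ _⟩
      have hprodlt : ∏ i, (1 + T * r ^ α * d i ^ (-α))⁻¹
          < ∏ i, (1 + Sth * r ^ α * d i ^ (-α))⁻¹ := by
        apply Finset.prod_lt_prod_of_nonempty (fun i _ => hfpos T hT.le i) _ huniv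
        intro i _
        have hx : (0:ℝ) < (T - Sth) * (r ^ α * d i ^ (-α)) :=
          mul_pos (by linarith) (mul_pos hK (hc i))
        have h0 : (0:ℝ) ≤ Sth * r ^ α * d i ^ (-α) :=
          mul_nonneg (mul_nonneg hSth hK.le) (hc i).le
        apply inv_strictAnti₀
        · linarith
        · nlinarith
      have hexp : Real.exp (-(T * r ^ α * N)) ≤ Real.exp (-(Sth * r ^ α * N)) := by
        apply Real.exp_le_exp.mpr
        have : (0:ℝ) ≤ (T - Sth) * r ^ α * N :=
          mul_nonneg (mul_nonneg (by linarith) hK.le) hN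
        nlinarith
      calc Real.exp (-(T * r ^ α * N)) * ∏ i, (1 + T * r ^ α * d i ^ (-α))⁻¹
          ≤ Real.exp (-(Sth * r ^ α * N)) * ∏ i, (1 + T * r ^ α * d i ^ (-α))⁻¹ :=
            mul_le_mul_of_nonneg_right hexp
              (Finset.prod_nonneg fun i _ => (hfpos T hT.le i).le)
        _ < Real.exp (-(Sth * r ^ α * N)) * ∏ i, (1 + Sth * r ^ α * d i ^ (-α))⁻¹ :=
            mul_lt_mul_of_pos_left hprodlt (Real.exp_pos _)
  linarith
end

section
/- Fix T > 0, positive reals (c_j)_{j∈ψ} indexed by a nonempty finite set ψ, and a nonempty subset φ ⊆ ψ. For S ≥ 0 define ρ(S) = ∫_0^∞ ∏_{j∈ψ}(1 + max(e^t−1, T, S) c_j)^{-1} dt + (1/3)·(1 − ∏_{j∈ψ}(1 + S c_j)^{-1}) · ∫_0^∞ ∏_{i∈φ}(1 + max(e^t−1, T) c_i)^{-1} dt. Then for every S with 0 ≤ S < T, ρ(S) < ρ(T). -/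
/-!
For `S < T` the threshold `S` is absorbed by `T` in the cell-centre integrand, so the two rates
differ only in the cell-edge term. There the factor `1 - ∏ j, (1 + S * c j)⁻¹` is strictly
increasing in `S`, and the cell-edge integral is strictly positive: its integrand is positive and,
since `1 + (eᵗ - 1) c ≥ min 1 c · eᵗ`, bounded by a multiple of `e⁻ᵗ`, hence integrable.
-/

open MeasureTheory

/-- The FFR normalized average rate at SIR threshold `S` and target SIR `T`
(uncorrelated sub-band case), with interference coefficients `c j > 0` over the
full interferer set (the whole finite index type) and cell-edge interferer set `φ`. -/
noncomputable def ffrRate {ι : Type*} [Fintype ι] (φ : Finset ι) (c : ι → ℝ)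
    (T S : ℝ) : ℝ :=
  (∫ t in Set.Ioi (0 : ℝ), ∏ j, (1 + max (max (Real.exp t - 1) T) S * c j)⁻¹)
    + (1/3) * (1 - ∏ j, (1 + S * c j)⁻¹) *
        ∫ t in Set.Ioi (0 : ℝ), ∏ i ∈ φ, (1 + max (Real.exp t - 1) T * c i)⁻¹

open Real Finset Set

lemma prod_inv_one_add_mul_lt_prod {ι : Type*} {s : Finset ι} (hs : s.Nonempty) {c : ι → ℝ}
    (hc : ∀ i ∈ s, 0 < c i) {x y : ℝ} (hx : 0 ≤ x) (hxy : x < y) :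
    ∏ i ∈ s, (1 + y * c i)⁻¹ < ∏ i ∈ s, (1 + x * c i)⁻¹ := by
  have hx_pos (i : ι) (hi : i ∈ s) : 0 < 1 + x * c i := by
    nlinarith [mul_nonneg hx (hc i hi).le]
  refine prod_lt_prod_of_nonempty (fun i hi => inv_pos.2 ?_) (fun i hi => ?_) hs
  · nlinarith [hx_pos i hi, hc i hi]
  · exact inv_strictAnti₀ (hx_pos i hi) (by nlinarith [hc i hi])

lemma min_one_mul_exp_le_one_add_mul {c t : ℝ} (ht : 0 ≤ t) :
    min 1 c * exp t ≤ 1 + (exp t - 1) * c := by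
  have he : 1 ≤ exp t := one_le_exp ht
  rcases le_total c 1 with hc1 | hc1
  · rw [min_eq_right hc1]
    nlinarith
  · rw [min_eq_left hc1]
    nlinarith

lemma setIntegral_Ioi_pos {f : ℝ → ℝ} {a : ℝ} (hf : IntegrableOn f (Ioi a))
    (hpos : ∀ t ∈ Ioi a, 0 < f t) : 0 < ∫ t in Ioi a, f t := by
  rw [setIntegral_pos_iff_support_of_nonneg_ae
    (ae_restrict_of_forall_mem measurableSet_Ioi fun t ht => (hpos t ht).le) hf,
    inter_eq_right.2 fun t ht => Function.mem_support.2 (hpos t ht).ne', Real.volume_Ioi]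
  exact ENNReal.zero_lt_top

lemma one_le_one_add_max_exp_sub_one_mul {c T : ℝ} (hT : 0 ≤ T) (hc : 0 ≤ c) (t : ℝ) :
    1 ≤ 1 + max (exp t - 1) T * c := by
  have : 0 ≤ max (exp t - 1) T := hT.trans (le_max_right _ _)
  have : 0 ≤ max (exp t - 1) T * c := by positivity
  linarith

lemma inv_one_add_max_exp_sub_one_mul_le {c T t : ℝ} (hc : 0 < c) (ht : 0 ≤ t) :
    (1 + max (exp t - 1) T * c)⁻¹ ≤ (min 1 c)⁻¹ * exp (-t) := by
  rw [exp_neg, ← mul_inv]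
  refine inv_anti₀ (by positivity) ((min_one_mul_exp_le_one_add_mul ht).trans ?_)
  gcongr
  exact le_max_left _ _

section EdgeIntegrand

variable {ι : Type*} {φ : Finset ι} {c : ι → ℝ} {T : ℝ}

lemma integrableOn_prod_inv_one_add_max_exp_sub_one_mul (hφ : φ.Nonempty) (hc : ∀ i, 0 < c i)
    (hT : 0 ≤ T) :
    IntegrableOn (fun t => ∏ i ∈ φ, (1 + max (exp t - 1) T * c i)⁻¹) (Ioi 0) := by
  obtain ⟨i₀, hi₀⟩ := hφ
  have hfactor (i : ι) (t : ℝ) := one_le_one_add_max_exp_sub_one_mul hT (hc i).le t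
  have hfactor_pos (i : ι) (t : ℝ) := zero_lt_one.trans_le (hfactor i t)
  refine Integrable.mono' ((exp_neg_integrableOn_Ioi 0 one_pos).const_mul (min 1 (c i₀))⁻¹)
    (Continuous.aestronglyMeasurable (continuous_finsetProd _ fun i _ =>
      Continuous.inv₀ (by fun_prop) fun t => (hfactor_pos i t).ne')) ?_
  filter_upwards [ae_restrict_mem measurableSet_Ioi] with t ht
  rw [norm_of_nonneg (prod_pos fun i _ => inv_pos.2 (hfactor_pos i t)).le, neg_one_mul]
  calc ∏ i ∈ φ, (1 + max (exp t - 1) T * c i)⁻¹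
      ≤ ∏ i ∈ {i₀}, (1 + max (exp t - 1) T * c i)⁻¹ :=
        prod_le_prod_of_subset_of_le_one (singleton_subset_iff.2 hi₀)
          (fun i _ => (inv_pos.2 (hfactor_pos i t)).le)
          (fun i _ _ => inv_le_one_of_one_le₀ (hfactor i t))
    _ ≤ (min 1 (c i₀))⁻¹ * exp (-t) := by
        rw [Finset.prod_singleton]
        exact inv_one_add_max_exp_sub_one_mul_le (hc i₀) ht.le

lemma integral_prod_inv_one_add_max_exp_sub_one_mul_pos (hφ : φ.Nonempty) (hc : ∀ i, 0 < c i)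
    (hT : 0 ≤ T) :
    0 < ∫ t in Ioi 0, ∏ i ∈ φ, (1 + max (exp t - 1) T * c i)⁻¹ :=
  setIntegral_Ioi_pos (integrableOn_prod_inv_one_add_max_exp_sub_one_mul hφ hc hT) fun t _ =>
    prod_pos fun i _ => inv_pos.2 <|
      zero_lt_one.trans_le (one_le_one_add_max_exp_sub_one_mul hT (hc i).le t)

end EdgeIntegrand

/-- every SIR threshold `S` with `0 ≤ S < T` gives a strictly smaller
FFR normalized average rate than the threshold `S = T`. -/
theorem ffrRate_lt_of_lt_target
    {ι : Type*} [Fintype ι] [Nonempty ι]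
    (φ : Finset ι) (hφ : φ.Nonempty)
    (c : ι → ℝ) (hc : ∀ j, 0 < c j)
    (T : ℝ) (hT : 0 < T) :
    ∀ S : ℝ, 0 ≤ S → S < T → ffrRate φ c T S < ffrRate φ c T T := by
  intro S hS hST
  have hcentre (t : ℝ) : max (max (exp t - 1) T) S = max (max (exp t - 1) T) T := by
    rw [max_eq_left (hST.le.trans (le_max_right _ _)), max_eq_left (le_max_right _ _)]
  have hedge_prob := prod_inv_one_add_mul_lt_prod univ_nonempty (fun j _ => hc j) hS hST
  have hedge_int := integral_prod_inv_one_add_max_exp_sub_one_mul_pos hφ hc hT.le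
  unfold ffrRate
  simp only [hcentre]
  gcongr
end

section
/- Let (c_j)_{j∈ψ} be nonnegative reals indexed by a finite set ψ, with c_j > 0 for at least one j, and let K ∈ ℝ. Define P(S) = ∏_{j∈ψ}(1 + S c_j) and G(S) = ln(1+S)/P(S) + ∫_{ln(1+S)}^∞ ∏_{j∈ψ}(1 + (e^t − 1) c_j)^{-1} dt + (1 − 1/P(S))·K. Then for every S ≥ 0, G is differentiable at S with G'(S) = (K − ln(1+S)) · P'(S) / P(S)², where P'(S) = Σ_{i∈ψ} c_i · ∏_{j∈ψ, j≠i}(1 + S c_j). -/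
open MeasureTheory

/-- Interference polynomial `P(S) = ∏_j (1 + S c_j)`. -/
noncomputable def interfPoly {ι : Type*} [Fintype ι] (c : ι → ℝ) (S : ℝ) : ℝ :=
  ∏ j, (1 + S * c j)

/-- Single-user FFR normalized average rate as a function of the SIR threshold `S`
(in the regime `S ≥ T`): cell-centre rate `ln(1+S)/P(S)` plus tail integral, plus
cell-edge contribution `(1 − 1/P(S))·K`. -/
noncomputable def ffrRateG {ι : Type*} [Fintype ι] (c : ι → ℝ) (K S : ℝ) : ℝ :=
  Real.log (1 + S) / interfPoly c S
    + (∫ t in Set.Ioi (Real.log (1 + S)), ∏ j, (1 + (Real.exp t - 1) * c j)⁻¹)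
    + (1 - (interfPoly c S)⁻¹) * K

/-!
Splitting off a bounded piece, the tail integral is `∫_{b}^{∞} f - ∫_{b}^{ln(1+S)} f`, so by the
fundamental theorem of calculus its derivative is `-f(ln(1+S))/(1+S) = -1/((1+S) P(S))`: at
`t = ln(1+S)` the integrand is exactly `1/P(S)`. This cancels the term `1/((1+S) P(S))` coming
from `ln(1+S)/P(S)`, and what is left is `(K - ln(1+S)) P'(S)/P(S)²`. The integrand decays like
`e^{-t}` because some `c_j > 0`; the base point `b` must be negative because at `S = 0` the
lower limit `ln(1+S) = 0` has to be an interior point.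
-/

open Set Filter Real

theorem hasDerivAt_setIntegral_Ioi {E : Type*} [NormedAddCommGroup E] [NormedSpace ℝ E]
    [CompleteSpace E] {f : ℝ → E} {b x : ℝ} (hf : IntegrableOn f (Ioi b)) (hbx : b < x)
    (hfx : ContinuousAt f x) :
    HasDerivAt (fun y => ∫ t in Ioi y, f t) (-f x) x := by
  have hFTC : HasDerivAt (fun y => ∫ t in b..y, f t) (f x) x :=
    intervalIntegral.integral_hasDerivAt_right
      ((intervalIntegrable_iff_integrableOn_Ioc_of_le hbx.le).2
        (hf.mono_set Ioc_subset_Ioi_self))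
      ⟨Ioi b, Ioi_mem_nhds hbx, hf.aestronglyMeasurable⟩ hfx
  refine (hFTC.const_sub (∫ t in Ioi b, f t)).congr_of_eventuallyEq ?_
  filter_upwards [Ioi_mem_nhds hbx] with y hy
  rw [← intervalIntegral.integral_Ioi_sub_Ioi hf (le_of_lt hy), sub_sub_cancel]

section

variable {ι : Type*} [Fintype ι] (c : ι → ℝ)

theorem hasDerivAt_interfPoly [DecidableEq ι] (S : ℝ) :
    HasDerivAt (interfPoly c) (∑ i, c i * ∏ j ∈ Finset.univ.erase i, (1 + S * c j)) S := by
  refine (HasDerivAt.fun_finsetProd (u := Finset.univ) (f := fun i u => 1 + u * c i)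
    fun i _ => (hasDerivAt_mul_const (c i)).const_add 1).congr_deriv ?_
  simp only [smul_eq_mul, mul_comm]

theorem interfPoly_pos {c : ι → ℝ} (hc : ∀ j, 0 ≤ c j) {S : ℝ} (hS : 0 ≤ S) :
    0 < interfPoly c S :=
  Finset.prod_pos fun j _ => by nlinarith [hc j]

noncomputable def tailIntegrand (t : ℝ) : ℝ :=
  ∏ j, (1 + (exp t - 1) * c j)⁻¹

theorem tailIntegrand_log {S : ℝ} (hS : 0 < 1 + S) :
    tailIntegrand c (log (1 + S)) = (interfPoly c S)⁻¹ := by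
  simp only [tailIntegrand, interfPoly, exp_log hS, add_sub_cancel_left, Finset.prod_inv_distrib]

theorem continuousOn_tailIntegrand {s : Set ℝ} (hs : ∀ t ∈ s, ∀ j, 1 + (exp t - 1) * c j ≠ 0) :
    ContinuousOn (tailIntegrand c) s :=
  continuousOn_finsetProd _ fun j _ =>
    (by fun_prop : Continuous fun t => 1 + (exp t - 1) * c j).continuousOn.inv₀ (hs · · j)

variable {c}

theorem exists_neg_forall_le_one_add_exp_sub_one_mul_pos (hc : ∀ j, 0 ≤ c j) :
    ∃ b < 0, ∀ t, b ≤ t → ∀ j, 0 < 1 + (exp t - 1) * c j := by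
  have hsum : 0 < 1 + ∑ j, c j :=
    add_pos_of_pos_of_nonneg one_pos (Finset.sum_nonneg fun j _ => hc j)
  refine ⟨-(1 + ∑ j, c j)⁻¹, neg_neg_of_pos (inv_pos.2 hsum), fun t ht j => ?_⟩
  have hcj : c j ≤ ∑ j, c j := Finset.single_le_sum (fun j _ => hc j) (Finset.mem_univ j)
  have hsmall : (1 + ∑ j, c j)⁻¹ * c j < 1 := by
    rw [inv_mul_lt_iff₀ hsum]; linarith
  have hexp : -(1 + ∑ j, c j)⁻¹ ≤ exp t - 1 := ht.trans (by linarith [add_one_le_exp t])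
  nlinarith [mul_le_mul_of_nonneg_right hexp (hc j)]

theorem one_le_one_add_exp_sub_one_mul {a t : ℝ} (ha : 0 ≤ a) (ht : 0 ≤ t) :
    1 ≤ 1 + (exp t - 1) * a :=
  le_add_of_nonneg_right (mul_nonneg (by linarith [one_le_exp ht]) ha)

theorem min_one_mul_exp_le_one_add_exp_sub_one_mul {a t : ℝ} (ht : 0 ≤ t) :
    min 1 a * exp t ≤ 1 + (exp t - 1) * a := by
  have h1 : 1 ≤ exp t := one_le_exp ht
  rcases le_total 1 a with h | h
  · rw [min_eq_left h]; nlinarith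
  · rw [min_eq_right h]; nlinarith

theorem tailIntegrand_le (hc : ∀ j, 0 ≤ c j) {j₀ : ι} (hj₀ : 0 < c j₀) {t : ℝ} (ht : 0 ≤ t) :
    tailIntegrand c t ≤ (min 1 (c j₀))⁻¹ * exp (-t) := by
  classical
  have hfac : ∀ j, 1 ≤ 1 + (exp t - 1) * c j := fun j => one_le_one_add_exp_sub_one_mul (hc j) ht
  calc tailIntegrand c t
      = (1 + (exp t - 1) * c j₀)⁻¹ * ∏ j ∈ Finset.univ.erase j₀, (1 + (exp t - 1) * c j)⁻¹ :=
        (Finset.mul_prod_erase _ _ (Finset.mem_univ j₀)).symm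
    _ ≤ (min 1 (c j₀) * exp t)⁻¹ * 1 := by
        have hnonneg : ∀ j ∈ Finset.univ.erase j₀, 0 ≤ (1 + (exp t - 1) * c j)⁻¹ :=
          fun j _ => inv_nonneg.2 (zero_le_one.trans (hfac j))
        gcongr
        · exact Finset.prod_nonneg hnonneg
        · exact min_one_mul_exp_le_one_add_exp_sub_one_mul ht
        · exact Finset.prod_le_one hnonneg fun j _ => inv_le_one_of_one_le₀ (hfac j)
    _ = (min 1 (c j₀))⁻¹ * exp (-t) := by rw [mul_one, mul_inv, exp_neg]

theorem tailIntegrand_isBigO (hc : ∀ j, 0 ≤ c j) (hc' : ∃ j, 0 < c j) :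
    tailIntegrand c =O[atTop] fun t => exp (-1 * t) := by
  obtain ⟨j₀, hj₀⟩ := hc'
  refine Asymptotics.IsBigO.of_bound (min 1 (c j₀))⁻¹ ?_
  filter_upwards [eventually_ge_atTop 0] with t ht
  rw [norm_of_nonneg (show 0 ≤ tailIntegrand c t from Finset.prod_nonneg fun j _ =>
      inv_nonneg.2 (zero_le_one.trans (one_le_one_add_exp_sub_one_mul (hc j) ht))),
    neg_one_mul, norm_of_nonneg (exp_pos _).le]
  exact tailIntegrand_le hc hj₀ ht

end

/-- for every `S ≥ 0`, `G` is differentiable at `S` with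
`G'(S) = (K − ln(1+S)) · P'(S) / P(S)²`, where
`P'(S) = ∑_i c_i ∏_{j ≠ i} (1 + S c_j)`. -/
theorem ffrRateG_hasDerivAt
    {ι : Type*} [Fintype ι] [DecidableEq ι]
    (c : ι → ℝ) (hc : ∀ j, 0 ≤ c j) (hc' : ∃ j, 0 < c j)
    (K : ℝ) :
    ∀ S : ℝ, 0 ≤ S →
      HasDerivAt (ffrRateG c K)
        ((K - Real.log (1 + S)) *
            (∑ i, c i * ∏ j ∈ Finset.univ.erase i, (1 + S * c j))
          / (interfPoly c S) ^ 2) S := by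
  intro S hS
  have h1S : 0 < 1 + S := by linarith
  obtain ⟨b, hb, hfac⟩ := exists_neg_forall_le_one_add_exp_sub_one_mul_pos hc
  have hcont : ContinuousOn (tailIntegrand c) (Ici b) :=
    continuousOn_tailIntegrand c fun t ht j => (hfac t ht j).ne'
  have hbx : b < log (1 + S) := hb.trans_le (log_nonneg (by linarith))
  have hlog : HasDerivAt (fun u => log (1 + u)) (1 + S)⁻¹ S := by
    simpa using ((hasDerivAt_id S).const_add 1).log h1S.ne'
  have hP := hasDerivAt_interfPoly c S
  have hP0 := (interfPoly_pos hc hS).ne'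
  have hTail : HasDerivAt (fun x => ∫ t in Ioi x, tailIntegrand c t)
      (-(interfPoly c S)⁻¹) (log (1 + S)) := by
    rw [← tailIntegrand_log c h1S]
    exact hasDerivAt_setIntegral_Ioi
      (integrable_of_isBigO_exp_neg one_pos hcont (tailIntegrand_isBigO hc hc')) hbx
      (hcont.continuousAt (Ici_mem_nhds hbx))
  -- `ffrRateG c K` is definitionally the sum of these three functions of `S`.
  refine (((hlog.div hP hP0).add (hTail.comp S hlog)).add
    (((hP.inv hP0).const_sub 1).mul_const K)).congr_deriv ?_
  field_simp
  ring
end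

section
/- Let (c_j)_{j∈ψ} be nonnegative reals indexed by a finite set ψ, with c_j > 0 for at least one j, and let K > 0. Define P(S) = ∏_{j∈ψ}(1 + S c_j) and G(S) = ln(1+S)/P(S) + ∫_{ln(1+S)}^∞ ∏_{j∈ψ}(1 + (e^t − 1) c_j)^{-1} dt + (1 − 1/P(S))·K. Then G attains its maximum over [0,∞) uniquely at S = e^K − 1; that is, G(S) < G(e^K − 1) for every S ≥ 0 with S ≠ e^K − 1. -/
open MeasureTheory

namespace FfrAux

open Real Set

variable {ι : Type*} [Fintype ι]

/-- The function `Q t = ∏_j (1 + (e^t − 1) c_j)`. -/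
noncomputable def Qf (c : ι → ℝ) (t : ℝ) : ℝ := ∏ j, (1 + (Real.exp t - 1) * c j)

lemma one_le_Qf (c : ι → ℝ) (hc : ∀ j, 0 ≤ c j) {t : ℝ} (ht : 0 ≤ t) : 1 ≤ Qf c t := by
  rw [Qf]
  calc (1:ℝ) = ∏ _j : ι, (1:ℝ) := (Finset.prod_const_one).symm
    _ ≤ ∏ j, (1 + (Real.exp t - 1) * c j) := by
        refine Finset.prod_le_prod (fun j _ => zero_le_one) (fun j _ => ?_)
        have h1 : 1 ≤ Real.exp t := Real.one_le_exp ht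
        nlinarith [hc j]

lemma Qf_pos (c : ι → ℝ) (hc : ∀ j, 0 ≤ c j) {t : ℝ} (ht : 0 ≤ t) : 0 < Qf c t :=
  lt_of_lt_of_le one_pos (one_le_Qf c hc ht)

lemma Qf_mono (c : ι → ℝ) (hc : ∀ j, 0 ≤ c j) {s t : ℝ} (hs : 0 ≤ s) (hst : s ≤ t) :
    Qf c s ≤ Qf c t := by
  refine Finset.prod_le_prod (fun j _ => ?_) (fun j _ => ?_)
  · have h1 : 1 ≤ Real.exp s := Real.one_le_exp hs
    nlinarith [hc j]
  · have := Real.exp_le_exp.2 hst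
    nlinarith [hc j]

lemma Qf_strict_mono (c : ι → ℝ) (hc : ∀ j, 0 ≤ c j) {j0 : ι} (hj0 : 0 < c j0)
    {s t : ℝ} (hs : 0 ≤ s) (hst : s < t) : Qf c s < Qf c t := by
  refine Finset.prod_lt_prod (fun j _ => ?_) (fun j _ => ?_) ⟨j0, Finset.mem_univ _, ?_⟩
  · have h1 : 1 ≤ Real.exp s := Real.one_le_exp hs
    nlinarith [hc j]
  · have := Real.exp_le_exp.2 hst.le
    nlinarith [hc j]
  · have := Real.exp_lt_exp.2 hst
    nlinarith

lemma Qf_lower (c : ι → ℝ) (hc : ∀ j, 0 ≤ c j) {j0 : ι} (hj0 : 0 < c j0)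
    {t : ℝ} (ht : 0 ≤ t) : min (c j0) 1 * Real.exp t ≤ Qf c t := by
  have h1 : 1 ≤ Real.exp t := Real.one_le_exp ht
  have hfac : min (c j0) 1 * Real.exp t ≤ 1 + (Real.exp t - 1) * c j0 := by
    rcases le_total (c j0) 1 with h | h
    · rw [min_eq_left h]; nlinarith
    · rw [min_eq_right h]; nlinarith
  refine hfac.trans ?_
  classical
  rw [Qf, ← Finset.mul_prod_erase Finset.univ _ (Finset.mem_univ j0)]
  have hrest : (1:ℝ) ≤ ∏ j ∈ Finset.univ.erase j0, (1 + (Real.exp t - 1) * c j) := by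
    calc (1:ℝ) = ∏ _j ∈ Finset.univ.erase j0, (1:ℝ) := (Finset.prod_const_one).symm
      _ ≤ _ := by
          refine Finset.prod_le_prod (fun j _ => zero_le_one) (fun j _ => ?_)
          nlinarith [hc j]
  nlinarith [hc j0, mul_le_mul_of_nonneg_left hrest (by nlinarith [hc j0] : (0:ℝ) ≤ 1 + (Real.exp t - 1) * c j0)]

lemma Qf_measurable (c : ι → ℝ) : Measurable (Qf c) := by
  apply Finset.measurable_prod
  intro j _
  fun_prop

lemma Qf_inv_integrableOn (c : ι → ℝ) (hc : ∀ j, 0 ≤ c j) {j0 : ι} (hj0 : 0 < c j0)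
    {a : ℝ} (ha : 0 ≤ a) :
    IntegrableOn (fun t => (Qf c t)⁻¹) (Set.Ioi a) := by
  set m := min (c j0) 1 with hm
  have hm0 : 0 < m := lt_min hj0 one_pos
  have hint : IntegrableOn (fun t => m⁻¹ * Real.exp (-1 * t)) (Set.Ioi a) :=
    (exp_neg_integrableOn_Ioi a one_pos).const_mul m⁻¹
  refine hint.mono' ((Qf_measurable c).inv.aestronglyMeasurable.restrict) ?_
  filter_upwards [ae_restrict_mem measurableSet_Ioi] with t ht
  have ht' : 0 ≤ t := le_trans ha (le_of_lt ht)
  have hQpos : 0 < Qf c t := Qf_pos c hc ht'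
  have hlow : m * Real.exp t ≤ Qf c t := Qf_lower c hc hj0 ht'
  have hme : 0 < m * Real.exp t := mul_pos hm0 (Real.exp_pos t)
  have : (Qf c t)⁻¹ ≤ (m * Real.exp t)⁻¹ := inv_anti₀ hme hlow
  rw [Real.norm_eq_abs, abs_of_pos (inv_pos.2 hQpos)]
  calc (Qf c t)⁻¹ ≤ (m * Real.exp t)⁻¹ := this
    _ = m⁻¹ * Real.exp (-1 * t) := by
        rw [mul_inv, ← Real.exp_neg]; ring_nf

lemma Qf_inv_contOn (c : ι → ℝ) (hc : ∀ j, 0 ≤ c j) {a b : ℝ} (ha : 0 ≤ a) :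
    ContinuousOn (fun t => (Qf c t)⁻¹) (Set.Icc a b) := by
  refine ContinuousOn.inv₀ ?_ ?_
  · apply Continuous.continuousOn
    apply continuous_finset_prod
    intro j _
    fun_prop
  · intro t ht
    exact ne_of_gt (Qf_pos c hc (le_trans ha ht.1))

end FfrAux

open FfrAux Real Set

/-- `G` attains its maximum over `[0,∞)` uniquely at `S = e^K − 1`:
for every `S ≥ 0` with `S ≠ e^K − 1`, `G(S) < G(e^K − 1)`. -/
theorem ffrRateG_uniquely_maximized
    {ι : Type*} [Fintype ι]
    (c : ι → ℝ) (hc : ∀ j, 0 ≤ c j) (hc' : ∃ j, 0 < c j)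
    (K : ℝ) (hK : 0 < K) :
    ∀ S : ℝ, 0 ≤ S → S ≠ Real.exp K - 1 →
      ffrRateG c K S < ffrRateG c K (Real.exp K - 1) := by
  obtain ⟨j0, hj0⟩ := hc'
  intro S hS hne
  set u := Real.log (1 + S) with hu
  have h1S : (0:ℝ) < 1 + S := by linarith
  have hexp_u : Real.exp u = 1 + S := Real.exp_log h1S
  have hu0 : 0 ≤ u := Real.log_nonneg (by linarith)
  have huK : u ≠ K := by
    intro h
    apply hne
    have : Real.exp K = 1 + S := by rw [← h, hexp_u]
    linarith
  -- rewrite both sides in terms of Qf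
  have hPS : interfPoly c S = Qf c u := by
    unfold interfPoly Qf
    congr 1
    ext j
    rw [hexp_u]
    ring
  have hlogK : Real.log (1 + (Real.exp K - 1)) = K := by
    have : 1 + (Real.exp K - 1) = Real.exp K := by ring
    rw [this, Real.log_exp]
  have hPK : interfPoly c (Real.exp K - 1) = Qf c K := rfl
  have hintegrand : ∀ t : ℝ, (∏ j, (1 + (Real.exp t - 1) * c j)⁻¹) = (Qf c t)⁻¹ := by
    intro t
    rw [Qf, ← Finset.prod_inv_distrib]
  have hGS : ffrRateG c K S
      = u / Qf c u + (∫ t in Set.Ioi u, (Qf c t)⁻¹) + (1 - (Qf c u)⁻¹) * K := by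
    unfold ffrRateG
    rw [hPS, ← hu,
      setIntegral_congr_fun measurableSet_Ioi (fun t (_ : t ∈ Set.Ioi u) => hintegrand t)]
  have hGK : ffrRateG c K (Real.exp K - 1)
      = K / Qf c K + (∫ t in Set.Ioi K, (Qf c t)⁻¹) + (1 - (Qf c K)⁻¹) * K := by
    unfold ffrRateG
    rw [hPK, hlogK,
      setIntegral_congr_fun measurableSet_Ioi (fun t (_ : t ∈ Set.Ioi K) => hintegrand t)]
  rw [hGS, hGK]
  have hQu : 0 < Qf c u := Qf_pos c hc hu0
  have hQK : 0 < Qf c K := Qf_pos c hc hK.le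
  -- main inequality: (u - K) * (Qf c u)⁻¹ + ∫_{Ioi u} < ∫_{Ioi K}
  have key : (u - K) * (Qf c u)⁻¹ + (∫ t in Set.Ioi u, (Qf c t)⁻¹)
      < ∫ t in Set.Ioi K, (Qf c t)⁻¹ := by
    rcases lt_or_gt_of_ne huK with hlt | hgt
    · -- u < K
      have hsplit : (∫ t in Set.Ioi u, (Qf c t)⁻¹)
          = (∫ t in Set.Ioc u K, (Qf c t)⁻¹) + ∫ t in Set.Ioi K, (Qf c t)⁻¹ := by
        rw [← Set.Ioc_union_Ioi_eq_Ioi hlt.le]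
        exact setIntegral_union (Set.Ioc_disjoint_Ioi le_rfl) measurableSet_Ioi
          ((Qf_inv_integrableOn c hc hj0 hu0).mono_set Set.Ioc_subset_Ioi_self)
          (Qf_inv_integrableOn c hc hj0 hK.le)
      have hIoc : (∫ t in Set.Ioc u K, (Qf c t)⁻¹) < (K - u) * (Qf c u)⁻¹ := by
        have h1 : (∫ t in Set.Ioc u K, (Qf c t)⁻¹) = ∫ t in u..K, (Qf c t)⁻¹ :=
          (intervalIntegral.integral_of_le hlt.le).symm
        have h2 : (∫ t in u..K, (Qf c u)⁻¹) = (K - u) * (Qf c u)⁻¹ := by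
          rw [intervalIntegral.integral_const, smul_eq_mul]
        rw [h1, ← h2]
        refine intervalIntegral.integral_lt_integral_of_continuousOn_of_le_of_exists_lt
          hlt (Qf_inv_contOn c hc hu0) continuousOn_const (fun x hx => ?_)
          ⟨K, Set.right_mem_Icc.2 hlt.le, ?_⟩
        · exact inv_anti₀ hQu
            (Qf_strict_mono c hc hj0 hu0 hx.1).le
        · exact inv_strictAnti₀ hQu (Qf_strict_mono c hc hj0 hu0 hlt)
      rw [hsplit]
      nlinarith
    · -- K < u
      have hsplit : (∫ t in Set.Ioi K, (Qf c t)⁻¹)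
          = (∫ t in Set.Ioc K u, (Qf c t)⁻¹) + ∫ t in Set.Ioi u, (Qf c t)⁻¹ := by
        rw [← Set.Ioc_union_Ioi_eq_Ioi hgt.le]
        exact setIntegral_union (Set.Ioc_disjoint_Ioi le_rfl) measurableSet_Ioi
          ((Qf_inv_integrableOn c hc hj0 hK.le).mono_set Set.Ioc_subset_Ioi_self)
          (Qf_inv_integrableOn c hc hj0 hu0)
      have hIoc : (u - K) * (Qf c u)⁻¹ < ∫ t in Set.Ioc K u, (Qf c t)⁻¹ := by
        have h1 : (∫ t in Set.Ioc K u, (Qf c t)⁻¹) = ∫ t in K..u, (Qf c t)⁻¹ :=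
          (intervalIntegral.integral_of_le hgt.le).symm
        have h2 : (∫ t in K..u, (Qf c u)⁻¹) = (u - K) * (Qf c u)⁻¹ := by
          rw [intervalIntegral.integral_const, smul_eq_mul]
        rw [h1, ← h2]
        refine intervalIntegral.integral_lt_integral_of_continuousOn_of_le_of_exists_lt
          hgt continuousOn_const (Qf_inv_contOn c hc hK.le) (fun x hx => ?_)
          ⟨K, Set.left_mem_Icc.2 hgt.le, ?_⟩
        · have hQx : 0 < Qf c x := Qf_pos c hc (le_trans hK.le hx.1.le)
          exact inv_anti₀ hQx (Qf_mono c hc (le_trans hK.le hx.1.le) hx.2)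
        · exact inv_strictAnti₀ hQK (Qf_strict_mono c hc hj0 hK.le hgt)
      rw [hsplit]
      nlinarith
  have hdiv1 : u / Qf c u = u * (Qf c u)⁻¹ := div_eq_mul_inv _ _
  have hdiv2 : K / Qf c K = K * (Qf c K)⁻¹ := div_eq_mul_inv _ _
  nlinarith [key]
end
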